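/- arXiv:2102.12251 — 2 statements merged into one kernel-verified Lean document; each statement's English description precedes it below -/
import Mathlib

section
/- For m ∈ ℤ, p ∈ (1/2)ℤ, the operators on W = ℂ[x] ⊕ ℂ[y] satisfy the commutator relation [L_m, G_p] f = (m/2 − p) G_{m+p} f for all f ∈ ℂ[x], where L_m f(x) = λ^m(x + mα) f(x+m), L_m g(y) = λ^m(y + m(α + 1/2)) g(y+m), and G_p is defined as above. -/
open Polynomial

/- Half-integers `p ∈ (1/2)ℤ` are encoded by their doubles `a = 2p ∈ ℤ`; `λ^p = ν^a`
for a fixed square root `ν` of `λ` (so `λ = ν²`), `t^{2p} = t^a`. -/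

/-- `L_m` acting on `ℂ[x]` by `f ↦ λ^m (x + m β) f(x + m)`; on the even part the
parameter is `β = α`, on the odd part `β = α + 1/2`. -/
noncomputable def Lw (nu β : ℂ) (m : ℤ) (f : Polynomial ℂ) : Polynomial ℂ :=
  (nu ^ 2) ^ m • ((X + C ((m : ℂ) * β)) * f.comp (X + C (m : ℂ)))

/-- `G_p : ℂ[x] → ℂ[y]`, `G_p f(x) = t^{2p} λ^p f(y + p)`. -/
noncomputable def Geo (t nu : ℂ) (a : ℤ) (f : Polynomial ℂ) : Polynomial ℂ :=
  (t ^ a * nu ^ a) • f.comp (X + C ((a : ℂ) / 2))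

/- Both sides are multiples of `f(x + m + a/2)`: the shifts of `L_m` and `G_p` commute, and
the linear factors `x + m(α + 1/2)` and `x + a/2 + mα` differ by the constant `m/2 − a/2`.
The prefactors agree because `t^{a + 2m} = t^a` and `ν^{a + 2m} = ν^a λ^m`. -/

lemma Lw_eq_smul_taylor (nu β : ℂ) (m : ℤ) (f : ℂ[X]) :
    Lw nu β m f = (nu ^ 2) ^ m • ((X + C ((m : ℂ) * β)) * taylor (m : ℂ) f) :=
  rfl

lemma Geo_eq_smul_taylor (t nu : ℂ) (a : ℤ) (f : ℂ[X]) :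
    Geo t nu a f = (t ^ a * nu ^ a) • taylor ((a : ℂ) / 2) f :=
  rfl

lemma Lw_Geo (t nu β : ℂ) (m a : ℤ) (f : ℂ[X]) :
    Lw nu β m (Geo t nu a f)
      = ((nu ^ 2) ^ m * (t ^ a * nu ^ a)) •
          ((X + C ((m : ℂ) * β)) * taylor ((m : ℂ) + (a : ℂ) / 2) f) := by
  rw [Lw_eq_smul_taylor, Geo_eq_smul_taylor, map_smul, taylor_taylor, mul_smul_comm, smul_smul]

lemma Geo_Lw (t nu β : ℂ) (m a : ℤ) (f : ℂ[X]) :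
    Geo t nu a (Lw nu β m f)
      = ((nu ^ 2) ^ m * (t ^ a * nu ^ a)) •
          ((X + C ((a : ℂ) / 2 + (m : ℂ) * β)) * taylor ((m : ℂ) + (a : ℂ) / 2) f) := by
  rw [Lw_eq_smul_taylor, Geo_eq_smul_taylor, map_smul, taylor_mul, taylor_taylor, smul_smul,
    mul_comm (t ^ a * nu ^ a), add_comm ((a : ℂ) / 2)]
  simp only [taylor_apply, add_comp, X_comp, C_comp, add_assoc, C_add]

lemma Geo_add_two_mul {t nu : ℂ} (ht : t ^ 2 = 1) (hnu : nu ≠ 0) (m a : ℤ) (f : ℂ[X]) :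
    Geo t nu (a + 2 * m) f
      = ((nu ^ 2) ^ m * (t ^ a * nu ^ a)) • taylor ((m : ℂ) + (a : ℂ) / 2) f := by
  have ht0 : t ≠ 0 := by rintro rfl; norm_num at ht
  have hshift : ((a + 2 * m : ℤ) : ℂ) / 2 = (m : ℂ) + (a : ℂ) / 2 := by push_cast; ring
  rw [Geo_eq_smul_taylor, hshift, zpow_add₀ ht0, zpow_add₀ hnu, zpow_mul, zpow_mul]
  norm_cast
  rw [ht, one_zpow]
  ring_nf

/-- `[L_m, G_p] f = (m/2 − p) G_{m+p} f` for `f ∈ ℂ[x]`. -/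
theorem stmt6 (t nu α : ℂ) (ht : t = 1 ∨ t = -1) (hnu : nu ≠ 0)
    (m a : ℤ) (f : Polynomial ℂ) :
    Lw nu (α + 1/2) m (Geo t nu a f) - Geo t nu a (Lw nu α m f)
      = ((m : ℂ) / 2 - (a : ℂ) / 2) • Geo t nu (a + 2 * m) f := by
  have ht2 : t ^ 2 = 1 := by rcases ht with rfl | rfl <;> norm_num
  have hfactor : (X + C ((m : ℂ) * (α + 1 / 2))) - (X + C ((a : ℂ) / 2 + (m : ℂ) * α))
      = C ((m : ℂ) / 2 - (a : ℂ) / 2) := by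
    rw [add_sub_add_left_eq_sub, ← C_sub]
    ring_nf
  rw [Lw_Geo, Geo_Lw, Geo_add_two_mul ht2 hnu, ← smul_sub, ← sub_mul, hfactor, ← smul_eq_C_mul,
    smul_comm]
end

section
/- For r ∈ 1/2 + ℤ and p ∈ (1/2)ℤ, the operators on W = ℂ[x] ⊕ ℂ[y] satisfy [I_r, G_p] f = G_{r+p} f for all homogeneous f ∈ W, where I_r f(x) = −2t^{2r}λ^r α f(x+r), I_r g(y) = t^{2r}λ^r(1 − 2α) g(y+r), and G_p is as defined. -/
open Polynomial

/-- `G_p : ℂ[y] → ℂ[x]`, `G_p g(y) = (−t)^{2p} λ^p (x + 2pα) g(x + p)`. -/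
noncomputable def Goe (t nu α : ℂ) (a : ℤ) (g : Polynomial ℂ) : Polynomial ℂ :=
  ((-t) ^ a * nu ^ a) • ((X + C ((a : ℂ) * α)) * g.comp (X + C ((a : ℂ) / 2)))

/-- `I_r` on the even part: `I_r f(x) = −2 t^{2r} λ^r α f(x + r)`. -/
noncomputable def Ie (t nu α : ℂ) (b : ℤ) (f : Polynomial ℂ) : Polynomial ℂ :=
  (-2 * t ^ b * nu ^ b * α) • f.comp (X + C ((b : ℂ) / 2))

/-- `I_r` on the odd part: `I_r g(y) = t^{2r} λ^r (1 − 2α) g(y + r)`. -/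
noncomputable def Io (t nu α : ℂ) (b : ℤ) (g : Polynomial ℂ) : Polynomial ℂ :=
  (t ^ b * nu ^ b * (1 - 2 * α)) • g.comp (X + C ((b : ℂ) / 2))

section Commutator

variable {t nu α : ℂ} {a b : ℤ}

lemma Geo_eq_taylor (f : ℂ[X]) : Geo t nu a f = (t ^ a * nu ^ a) • taylor ((a : ℂ) / 2) f := rfl

lemma Goe_eq_taylor (g : ℂ[X]) :
    Goe t nu α a g = ((-t) ^ a * nu ^ a) • ((X + C ((a : ℂ) * α)) * taylor ((a : ℂ) / 2) g) :=
  rfl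

lemma Ie_eq_taylor (f : ℂ[X]) :
    Ie t nu α b f = (-2 * t ^ b * nu ^ b * α) • taylor ((b : ℂ) / 2) f := rfl

lemma Io_eq_taylor (g : ℂ[X]) :
    Io t nu α b g = (t ^ b * nu ^ b * (1 - 2 * α)) • taylor ((b : ℂ) / 2) g := rfl

lemma Io_Geo_sub_Geo_Ie (ht : t ≠ 0) (hnu : nu ≠ 0) (f : ℂ[X]) :
    Io t nu α b (Geo t nu a f) - Geo t nu a (Ie t nu α b f) = Geo t nu (a + b) f := by
  simp only [Geo_eq_taylor, Ie_eq_taylor, Io_eq_taylor, map_smul, taylor_taylor, ← add_div,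
    Int.cast_add, add_comm (b : ℂ), smul_smul, ← sub_smul, zpow_add₀ ht, zpow_add₀ hnu]
  congr 1
  ring

/-- The `α`-terms combine to `-2α - (1 - 2α) = -1`, and this sign is `(-t)^b = -t^b` for odd `b`. -/
lemma Ie_Goe_sub_Goe_Io (ht : t ≠ 0) (hnu : nu ≠ 0) (hb : Odd b) (g : ℂ[X]) :
    Ie t nu α b (Goe t nu α a g) - Goe t nu α a (Io t nu α b g) = Goe t nu α (a + b) g := by
  simp only [Goe_eq_taylor, Ie_eq_taylor, Io_eq_taylor, map_smul, taylor_mul, map_add, taylor_X,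
    taylor_taylor, ← add_div, Int.cast_add, add_comm (b : ℂ), add_mul, C_mul', mul_smul_comm,
    zpow_add₀ (neg_ne_zero.mpr ht), zpow_add₀ hnu, hb.neg_zpow]
  module

end Commutator

/-- `[I_r, G_p] = G_{r+p}` on both homogeneous parts of `W = ℂ[x] ⊕ ℂ[y]`. -/
theorem stmt7 (t nu α : ℂ) (ht : t = 1 ∨ t = -1) (hnu : nu ≠ 0)
    (a b : ℤ) (hb : Odd b) (f g : Polynomial ℂ) :
    Io t nu α b (Geo t nu a f) - Geo t nu a (Ie t nu α b f) = Geo t nu (a + b) f ∧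
    Ie t nu α b (Goe t nu α a g) - Goe t nu α a (Io t nu α b g)
      = Goe t nu α (a + b) g := by
  have ht0 : t ≠ 0 := by rcases ht with rfl | rfl <;> norm_num
  exact ⟨Io_Geo_sub_Geo_Ie ht0 hnu f, Ie_Goe_sub_Goe_Io ht0 hnu hb g⟩
end
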